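/- Assume every x ∈ T has at least two successors and that there exist c₁, c₂ > 1 with c₂ m_ν(y) ≤ m_ν(x) ≤ c₁ m_ν(y) for all x ∈ T and y ∈ s(x). Let b ∈ BMO and let K : T × ∂T → ℝ satisfy (A1), (A2) with constant C_K, and (A3) with exponent α > 0. Then there exists a constant C, depending only on c₁, c₂, C_K and α, such that Σ_{x ∈ T_v} |𝒦b(x)| m_ν(x) ≤ C ‖b‖_{BMO} m_ν(v) for every v ∈ T; in particular σ = |𝒦b| m_ν is a Carleson measure. -/

import Mathlib

open MeasureTheory
open scoped ENNReal NNReal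

/-- The punctured boundary `∂T` of the tree: maps `ω : ℤ → T` with `lev (ω j) = j`
and `par (ω j) = ω (j+1)`. -/
def PBoundary {T : Type*} (par : T → T) (lev : T → ℤ) : Type _ :=
  {ω : ℤ → T // (∀ j : ℤ, lev (ω j) = j) ∧ ∀ j : ℤ, par (ω j) = ω (j + 1)}

/-- The boundary sector `∂T_x`. -/
def sector {T : Type*} (par : T → T) (lev : T → ℤ) (x : T) : Set (PBoundary par lev) :=
  {ω : PBoundary par lev | ω.1 (lev x) = x}

/-- The σ-algebra on `∂T` generated by the sectors. -/
instance {T : Type*} (par : T → T) (lev : T → ℤ) : MeasurableSpace (PBoundary par lev) :=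
  MeasurableSpace.generateFrom (Set.range (sector par lev))

/-- The flow measure `m_ν x = ν (∂T_x)` (as a real number). -/
noncomputable def mnu {T : Type*} (par : T → T) (lev : T → ℤ)
    (ν : Measure (PBoundary par lev)) (x : T) : ℝ :=
  (ν (sector par lev x)).toReal

/-- The sector `T_x = {y ∈ T : y lies below x}`. -/
def tsector {T : Type*} (par : T → T) (x : T) : Set T :=
  {y : T | ∃ n : ℕ, par^[n] y = x}

universe u

/-!
Fix `v` and let `a` be the mean of `b` over `∂T_v`. By (A1), `𝒦b x = ∫ K(x,ω) (b ω - a) dν`.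
Split `∂T` into `∂T_v` and the annuli `∂T_{pⁿ⁺¹ v} \ ∂T_{pⁿ v}`. On `∂T_v`, summing over
`x ∈ T_v` and using (A2) gives `C_K ∫_{∂T_v} |b - a| ≤ C_K ‖b‖ m(v)`. On the `n`-th annulus the
confluent of `x ∈ T_v` is `pⁿ⁺¹ v`, so (A3) bounds `|K(x,·)|` by `m(x)^α / m(pⁿ⁺¹ v)^(α+1)`, while
chaining the BMO condition along the ancestors of `v` (each step costs `c₁ ‖b‖`) gives
`∫_{∂T_{pⁿ⁺¹ v}} |b - a| ≤ (1 + c₁ (n+1)) ‖b‖ m(pⁿ⁺¹ v)`. Since `m(pⁿ y) ≥ c₂ⁿ m(y)`, the annuli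
contribute a convergent series times `(m(x)/m(v))^α ≤ c₂^(-α d)` for `x` of depth `d` below `v`;
the vertices of depth `d` have disjoint sectors inside `∂T_v`, so the sum over `T_v` is geometric.
-/

section Measure

variable {α : Type*} [MeasurableSpace α] {μ : Measure α}

lemma tsum_lintegral_le_lintegral_tsum {ι : Type*} {f : ι → α → ℝ≥0∞}
    (hf : ∀ i, AEMeasurable (f i) μ) :
    ∑' i, ∫⁻ a, f i a ∂μ ≤ ∫⁻ a, ∑' i, f i a ∂μ := by
  rw [ENNReal.tsum_eq_iSup_sum]
  refine iSup_le fun s => ?_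
  rw [← lintegral_finsetSum' s fun i _ => hf i]
  exact lintegral_mono fun a => ENNReal.sum_le_tsum s

lemma lintegral_eq_setLIntegral_add_tsum_diff {s : ℕ → Set α} (hs : Monotone s)
    (hmeas : ∀ n, MeasurableSet (s n)) (hcover : ⋃ n, s n = Set.univ) (g : α → ℝ≥0∞) :
    ∫⁻ a, g a ∂μ = ∫⁻ a in s 0, g a ∂μ + ∑' n, ∫⁻ a in s (n + 1) \ s n, g a ∂μ := by
  rw [← setLIntegral_univ, ← hcover, ← iUnion_disjointed,
    lintegral_iUnion (MeasurableSet.disjointed hmeas) (disjoint_disjointed s),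
    tsum_eq_zero_add' ENNReal.summable, disjointed_zero]
  congr 2 with n
  rw [← Order.succ_eq_add_one, hs.disjointed_succ (not_isMax n)]

/-- Holds unconditionally: when `K * f` is not integrable, neither is `K * (f - c)`, and both
integrals are `0`. -/
lemma integral_mul_sub_const_of_integral_eq_zero {K : α → ℝ} (hK : Integrable K μ)
    (hK₀ : ∫ a, K a ∂μ = 0) (f : α → ℝ) (c : ℝ) :
    ∫ a, K a * (f a - c) ∂μ = ∫ a, K a * f a ∂μ := by
  have hKc : Integrable (fun a => K a * c) μ := hK.mul_const c
  simp_rw [mul_sub]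
  by_cases hKf : Integrable (fun a => K a * f a) μ
  · rw [integral_sub hKf hKc, integral_mul_const, hK₀, zero_mul, sub_zero]
  · refine (integral_undef hKf).symm ▸ integral_undef fun h => hKf ?_
    exact (h.add hKc).congr (ae_of_all _ fun a => by simp)

lemma abs_setAverage_sub_le {s t : Set α} {f : α → ℝ} (hst : s ⊆ t) (hs₀ : μ s ≠ 0)
    (ht : μ t ≠ ∞) (hf : IntegrableOn f t μ) (c : ℝ) :
    |⨍ a in s, f a ∂μ - c| ≤ (μ.real s)⁻¹ * ∫ a in t, |f a - c| ∂μ := by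
  have hs : μ s ≠ ∞ := ne_top_of_le_ne_top ht (measure_mono hst)
  have hμs : 0 < μ.real s := ENNReal.toReal_pos hs₀ hs
  have hfs : IntegrableOn f s μ := hf.mono_set hst
  have havg : ⨍ a in s, f a ∂μ - c = (μ.real s)⁻¹ * ∫ a in s, (f a - c) ∂μ := by
    rw [setAverage_eq, smul_eq_mul, integral_sub hfs (integrableOn_const hs),
      setIntegral_const, smul_eq_mul]
    field_simp
  rw [havg, abs_mul, abs_of_pos (inv_pos.2 hμs)]
  gcongr
  calc |∫ a in s, (f a - c) ∂μ| ≤ ∫ a in s, |f a - c| ∂μ := abs_integral_le_integral_abs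
    _ ≤ ∫ a in t, |f a - c| ∂μ :=
      setIntegral_mono_set (hf.sub (integrableOn_const ht)).abs
        (ae_of_all _ fun _ => abs_nonneg _) hst.eventuallyLE

lemma setIntegral_abs_sub_le_add {s : Set α} {f : α → ℝ} (hs : μ s ≠ ∞)
    (hf : IntegrableOn f s μ) (c c' : ℝ) :
    ∫ a in s, |f a - c| ∂μ ≤ ∫ a in s, |f a - c'| ∂μ + |c' - c| * μ.real s := by
  have hc : IntegrableOn (fun _ => |c' - c|) s μ := integrableOn_const hs
  have hfc' : IntegrableOn (fun a => |f a - c'|) s μ := (hf.sub (integrableOn_const hs)).abs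
  calc ∫ a in s, |f a - c| ∂μ ≤ ∫ a in s, (|f a - c'| + |c' - c|) ∂μ :=
        integral_mono (hf.sub (integrableOn_const hs)).abs (hfc'.add hc)
          fun a => abs_sub_le _ _ _
    _ = ∫ a in s, |f a - c'| ∂μ + |c' - c| * μ.real s := by
        rw [integral_add hfc' hc, setIntegral_const, smul_eq_mul, mul_comm]

lemma tsum_ofReal_mul_lintegral_le {ι : Type*} {K : ι → α → ℝ} {w : ι → ℝ} {G : α → ℝ≥0∞}
    {C : ℝ} (hK : ∀ i, AEMeasurable (K i) μ) (hG : AEMeasurable G μ)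
    (hKC : ∀ᵐ a ∂μ, ∑' i, ENNReal.ofReal (|K i a| * w i) ≤ ENNReal.ofReal C) :
    ∑' i, ENNReal.ofReal (w i) * ∫⁻ a, ENNReal.ofReal |K i a| * G a ∂μ
      ≤ ENNReal.ofReal C * ∫⁻ a, G a ∂μ := by
  calc _ = ∑' i, ∫⁻ a, ENNReal.ofReal (|K i a| * w i) * G a ∂μ := by
        refine tsum_congr fun i => ?_
        rw [← lintegral_const_mul' _ _ ENNReal.ofReal_ne_top]
        congr 1 with a
        rw [ENNReal.ofReal_mul (abs_nonneg _)]
        ring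
    _ ≤ ∫⁻ a, ∑' i, ENNReal.ofReal (|K i a| * w i) * G a ∂μ :=
        tsum_lintegral_le_lintegral_tsum fun i => by fun_prop
    _ = ∫⁻ a, (∑' i, ENNReal.ofReal (|K i a| * w i)) * G a ∂μ := by
        simp_rw [ENNReal.tsum_mul_right]
    _ ≤ ∫⁻ a, ENNReal.ofReal C * G a ∂μ := lintegral_mono_ae (hKC.mono fun a ha => by gcongr)
    _ = ENNReal.ofReal C * ∫⁻ a, G a ∂μ := lintegral_const_mul' _ _ ENNReal.ofReal_ne_top

end Measure

section Tree

variable {T : Type*} {par : T → T} {lev : T → ℤ}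

lemma lev_iterate (hlev : ∀ x, lev (par x) = lev x + 1) (x : T) (n : ℕ) :
    lev (par^[n] x) = lev x + n := by
  induction n with
  | zero => simp
  | succ n ih => rw [Function.iterate_succ_apply', hlev, ih]; push_cast; ring

lemma measurableSet_sector (x : T) : MeasurableSet (sector par lev x) :=
  MeasurableSpace.measurableSet_generateFrom ⟨x, rfl⟩

lemma mem_sector_iterate_iff (hlev : ∀ x, lev (par x) = lev x + 1) {x : T} {n : ℕ}
    {ω : PBoundary par lev} :
    ω ∈ sector par lev (par^[n] x) ↔ ω.1 (lev x + n) = par^[n] x := by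
  show ω.1 (lev (par^[n] x)) = par^[n] x ↔ _
  rw [lev_iterate hlev]

lemma sector_subset_sector_par (hlev : ∀ x, lev (par x) = lev x + 1) (y : T) :
    sector par lev y ⊆ sector par lev (par y) := by
  intro ω (hω : ω.1 (lev y) = y)
  show ω.1 (lev (par y)) = par y
  rw [hlev, ← ω.2.2, hω]

lemma monotone_sector_iterate (hlev : ∀ x, lev (par x) = lev x + 1) (x : T) :
    Monotone fun n => sector par lev (par^[n] x) :=
  monotone_nat_of_le_succ fun n => by
    simpa only [Function.iterate_succ_apply'] using sector_subset_sector_par hlev (par^[n] x)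

lemma sector_subset_sector_of_iterate_eq (hlev : ∀ x, lev (par x) = lev x + 1) {x v : T}
    {d : ℕ} (hd : par^[d] x = v) : sector par lev x ⊆ sector par lev v :=
  hd ▸ monotone_sector_iterate hlev x (Nat.zero_le d)

lemma tsum_measure_sector_of_iterate_eq_le (hlev : ∀ x, lev (par x) = lev x + 1)
    (ν : Measure (PBoundary par lev)) (v : T) (d : ℕ) :
    ∑' y : {y | par^[d] y = v}, ν (sector par lev y) ≤ ν (sector par lev v) := by
  refine (tsum_meas_le_meas_iUnion_of_disjoint ν
    (fun y : {y | par^[d] y = v} => measurableSet_sector y.1) ?_).trans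
    (measure_mono (Set.iUnion_subset fun y => sector_subset_sector_of_iterate_eq hlev y.2))
  rintro ⟨y, hy : par^[d] y = v⟩ ⟨z, hz : par^[d] z = v⟩ hyz
  have hlev_eq : lev y = lev z := by
    have hy' := lev_iterate hlev y d
    have hz' := lev_iterate hlev z d
    rw [hy] at hy'
    rw [hz] at hz'
    omega
  refine Set.disjoint_left.2 fun ω (hωy : ω.1 (lev y) = y) (hωz : ω.1 (lev z) = z) => hyz ?_
  exact Subtype.ext (hωy.symm.trans (hlev_eq ▸ hωz))

/-- `c` is the confluent `x ∧ ω`. -/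
def IsConfluent (par : T → T) (lev : T → ℤ) (x : T) (ω : PBoundary par lev) (c : T) : Prop :=
  ∃ n : ℕ, c = par^[n] x ∧ ω.1 (lev x + n) = par^[n] x ∧
    ∀ m : ℕ, ω.1 (lev x + m) = par^[m] x → n ≤ m

lemma iUnion_sector_iterate_eq_univ (hlev : ∀ x, lev (par x) = lev x + 1) {x : T}
    (hconf : ∀ ω, ∃ c, IsConfluent par lev x ω c) :
    ⋃ n, sector par lev (par^[n] x) = Set.univ :=
  Set.eq_univ_of_forall fun ω =>
    let ⟨_, n, _, hn, _⟩ := hconf ω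
    Set.mem_iUnion.2 ⟨n, (mem_sector_iterate_iff hlev).2 hn⟩

lemma IsConfluent.eq_of_mem_diff (hlev : ∀ x, lev (par x) = lev x + 1) {x v c : T}
    {ω : PBoundary par lev} {d n : ℕ} (h : IsConfluent par lev x ω c) (hd : par^[d] x = v)
    (hω : ω ∈ sector par lev (par^[n + 1] v) \ sector par lev (par^[n] v)) :
    c = par^[n + 1] v := by
  subst hd
  simp only [← Function.iterate_add_apply, Nat.add_right_comm n 1 d] at hω ⊢
  obtain ⟨k, rfl, hk, hmin⟩ := h
  have hle : k ≤ n + d + 1 := hmin _ ((mem_sector_iterate_iff hlev).1 hω.1)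
  have hgt : n + d < k := by
    by_contra! hkn
    exact hω.2 (monotone_sector_iterate hlev x hkn ((mem_sector_iterate_iff hlev).2 hk))
  rw [Nat.le_antisymm hle hgt]

lemma pow_mul_le_apply_iterate {f : T → ℝ} {c : ℝ} (hc : 0 ≤ c)
    (hf : ∀ y, c * f y ≤ f (par y)) (x : T) (n : ℕ) : c ^ n * f x ≤ f (par^[n] x) := by
  induction n with
  | zero => simp
  | succ n ih =>
    rw [Function.iterate_succ_apply', pow_succ', mul_assoc]
    exact (mul_le_mul_of_nonneg_left ih hc).trans (hf _)

end Tree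

lemma div_rpow_le_rpow_neg_pow {a M c α : ℝ} {n : ℕ} (ha : 0 < a) (hc : 0 < c) (hα : 0 ≤ α)
    (h : c ^ n * a ≤ M) : (a / M) ^ α ≤ (c ^ (-α)) ^ n := by
  have hcn : 0 < c ^ n := pow_pos hc n
  have hM : 0 < M := (mul_pos hcn ha).trans_le h
  have hle : a / M ≤ (c ^ n)⁻¹ := by
    rw [div_le_iff₀ hM]
    calc a = (c ^ n)⁻¹ * (c ^ n * a) := by field_simp
      _ ≤ (c ^ n)⁻¹ * M := by gcongr
  calc (a / M) ^ α ≤ ((c ^ n)⁻¹) ^ α := Real.rpow_le_rpow (by positivity) hle hα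
    _ = (c ^ (-α)) ^ n := by
      rw [Real.inv_rpow hcn.le, Real.rpow_neg hc.le, inv_pow, ← Real.rpow_natCast,
        ← Real.rpow_natCast, ← Real.rpow_mul hc.le, ← Real.rpow_mul hc.le, mul_comm]

section Flow

variable {T : Type*} {par : T → T} {lev : T → ℤ} {ν : Measure (PBoundary par lev)}

lemma mnu_pos (hν : ∀ x, 0 < ν (sector par lev x) ∧ ν (sector par lev x) < ⊤) (x : T) :
    0 < mnu par lev ν x :=
  ENNReal.toReal_pos (hν x).1.ne' (hν x).2.ne

lemma ofReal_mnu (hν : ∀ x, 0 < ν (sector par lev x) ∧ ν (sector par lev x) < ⊤) (x : T) :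
    ENNReal.ofReal (mnu par lev ν x) = ν (sector par lev x) :=
  ENNReal.ofReal_toReal (hν x).2.ne

lemma tsum_tsector_rpow_mul_measure_le (hlev : ∀ x, lev (par x) = lev x + 1)
    (hν : ∀ x, 0 < ν (sector par lev x) ∧ ν (sector par lev x) < ⊤) {c α : ℝ} (hc : 1 < c)
    (hα : 0 < α) (hgrow : ∀ y, c * mnu par lev ν y ≤ mnu par lev ν (par y)) (v : T) :
    ∑' x : tsector par v,
        ENNReal.ofReal ((mnu par lev ν x / mnu par lev ν v) ^ α) * ν (sector par lev x)
      ≤ ENNReal.ofReal (1 - c ^ (-α))⁻¹ * ν (sector par lev v) := by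
  set q := c ^ (-α)
  have hq0 : 0 ≤ q := Real.rpow_nonneg (by linarith) _
  have hq1 : q < 1 := Real.rpow_lt_one_of_one_lt_of_neg hc (neg_neg_of_pos hα)
  set f : T → ℝ≥0∞ := fun x =>
    ENNReal.ofReal ((mnu par lev ν x / mnu par lev ν v) ^ α) * ν (sector par lev x)
  have hdepth : ∀ d,
      ∑' x : {x | par^[d] x = v}, f x ≤ ENNReal.ofReal (q ^ d) * ν (sector par lev v) := by
    intro d
    calc ∑' x : {x | par^[d] x = v}, f x
        ≤ ∑' x : {x | par^[d] x = v}, ENNReal.ofReal (q ^ d) * ν (sector par lev x) := by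
          refine ENNReal.tsum_le_tsum fun x => ?_
          have hx : par^[d] x.1 = v := x.2
          refine mul_le_mul_left (ENNReal.ofReal_le_ofReal ?_) _
          refine div_rpow_le_rpow_neg_pow (mnu_pos hν x) (by linarith) hα.le ?_
          simpa only [hx] using pow_mul_le_apply_iterate (by linarith) hgrow x.1 d
      _ = ENNReal.ofReal (q ^ d) * ∑' x : {x | par^[d] x = v}, ν (sector par lev x) :=
          ENNReal.tsum_mul_left
      _ ≤ ENNReal.ofReal (q ^ d) * ν (sector par lev v) := by
          gcongr; exact tsum_measure_sector_of_iterate_eq_le hlev ν v d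
  calc ∑' x : tsector par v, f x = ∑' x : ⋃ d, {x | par^[d] x = v}, f x :=
        tsum_congr_set_coe f (Set.ofPred_exists fun d x => par^[d] x = v)
    _ ≤ ∑' d, ∑' x : {x | par^[d] x = v}, f x := ENNReal.tsum_iUnion_le_tsum f _
    _ ≤ ∑' d : ℕ, ENNReal.ofReal (q ^ d) * ν (sector par lev v) := ENNReal.tsum_le_tsum hdepth
    _ = ENNReal.ofReal (1 - q)⁻¹ * ν (sector par lev v) := by
      rw [ENNReal.tsum_mul_right, ← ENNReal.ofReal_tsum_of_nonneg (fun d => pow_nonneg hq0 d)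
        (summable_geometric_of_lt_one hq0 hq1), tsum_geometric_of_lt_one hq0 hq1]

variable {b : PBoundary par lev → ℝ} {B c₁ : ℝ}

lemma abs_average_sector_sub_average_sector_par_le (hlev : ∀ x, lev (par x) = lev x + 1)
    (hν : ∀ x, 0 < ν (sector par lev x) ∧ ν (sector par lev x) < ⊤)
    (hbint : ∀ x, IntegrableOn b (sector par lev x) ν) (hB : 0 ≤ B)
    (hBMO : ∀ x, ∫ ω in sector par lev x, |b ω - ⨍ ξ in sector par lev x, b ξ ∂ν| ∂ν
      ≤ B * mnu par lev ν x)
    (hdouble : ∀ y, mnu par lev ν (par y) ≤ c₁ * mnu par lev ν y) (y : T) :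
    |⨍ ω in sector par lev y, b ω ∂ν - ⨍ ω in sector par lev (par y), b ω ∂ν| ≤ c₁ * B := by
  have hy := mnu_pos hν y
  calc _ ≤ (mnu par lev ν y)⁻¹ * ∫ ω in sector par lev (par y),
        |b ω - ⨍ ξ in sector par lev (par y), b ξ ∂ν| ∂ν :=
        abs_setAverage_sub_le (sector_subset_sector_par hlev y) (hν y).1.ne'
          (hν (par y)).2.ne (hbint (par y)) _
    _ ≤ (mnu par lev ν y)⁻¹ * (B * (c₁ * mnu par lev ν y)) := by
        gcongr
        exact (hBMO (par y)).trans (by gcongr; exact hdouble y)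
    _ = c₁ * B := by field_simp

lemma abs_average_sector_iterate_sub_le (hlev : ∀ x, lev (par x) = lev x + 1)
    (hν : ∀ x, 0 < ν (sector par lev x) ∧ ν (sector par lev x) < ⊤)
    (hbint : ∀ x, IntegrableOn b (sector par lev x) ν) (hB : 0 ≤ B)
    (hBMO : ∀ x, ∫ ω in sector par lev x, |b ω - ⨍ ξ in sector par lev x, b ξ ∂ν| ∂ν
      ≤ B * mnu par lev ν x)
    (hdouble : ∀ y, mnu par lev ν (par y) ≤ c₁ * mnu par lev ν y) (v : T) (n : ℕ) :
    |⨍ ω in sector par lev (par^[n] v), b ω ∂ν - ⨍ ω in sector par lev v, b ω ∂ν|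
      ≤ n * (c₁ * B) := by
  set a : ℕ → ℝ := fun k => ⨍ ω in sector par lev (par^[k] v), b ω ∂ν
  calc |a n - a 0| = dist (a 0) (a n) := by rw [Real.dist_eq, abs_sub_comm]
    _ ≤ ∑ k ∈ Finset.range n, dist (a k) (a (k + 1)) := dist_le_range_sum_dist a n
    _ ≤ ∑ k ∈ Finset.range n, c₁ * B := by
        refine Finset.sum_le_sum fun k _ => ?_
        rw [Real.dist_eq]
        simp only [a, Function.iterate_succ_apply']
        exact abs_average_sector_sub_average_sector_par_le hlev hν hbint hB hBMO hdouble _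
    _ = n * (c₁ * B) := by simp

lemma lintegral_sector_iterate_abs_sub_average_le (hlev : ∀ x, lev (par x) = lev x + 1)
    (hν : ∀ x, 0 < ν (sector par lev x) ∧ ν (sector par lev x) < ⊤)
    (hbint : ∀ x, IntegrableOn b (sector par lev x) ν) (hB : 0 ≤ B)
    (hBMO : ∀ x, ∫ ω in sector par lev x, |b ω - ⨍ ξ in sector par lev x, b ξ ∂ν| ∂ν
      ≤ B * mnu par lev ν x)
    (hdouble : ∀ y, mnu par lev ν (par y) ≤ c₁ * mnu par lev ν y) (v : T) (n : ℕ) :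
    ∫⁻ ω in sector par lev (par^[n] v),
        ENNReal.ofReal |b ω - ⨍ ξ in sector par lev v, b ξ ∂ν| ∂ν
      ≤ ENNReal.ofReal (B * (1 + c₁ * n) * mnu par lev ν (par^[n] v)) := by
  set w := par^[n] v
  have hint : IntegrableOn (fun ω => |b ω - ⨍ ξ in sector par lev v, b ξ ∂ν|)
      (sector par lev w) ν := ((hbint w).sub (integrableOn_const (hν w).2.ne)).abs
  rw [← ofReal_integral_eq_lintegral_ofReal hint (ae_of_all _ fun _ => abs_nonneg _)]
  gcongr
  calc _ ≤ ∫ ω in sector par lev w, |b ω - ⨍ ξ in sector par lev w, b ξ ∂ν| ∂ν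
        + |⨍ ξ in sector par lev w, b ξ ∂ν - ⨍ ξ in sector par lev v, b ξ ∂ν| * mnu par lev ν w :=
        setIntegral_abs_sub_le_add (hν w).2.ne (hbint w) _ _
    _ ≤ B * mnu par lev ν w + n * (c₁ * B) * mnu par lev ν w :=
        add_le_add (hBMO w) (mul_le_mul_of_nonneg_right
          (abs_average_sector_iterate_sub_le hlev hν hbint hB hBMO hdouble v n) (mnu_pos hν w).le)
    _ = B * (1 + c₁ * n) * mnu par lev ν w := by ring

end Flow

lemma summable_one_add_mul_mul_pow_succ {q : ℝ} (hq0 : 0 ≤ q) (hq1 : q < 1) (c : ℝ) :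
    Summable fun n : ℕ => (1 + c * (n + 1)) * q ^ (n + 1) := by
  have hgeom : Summable fun n : ℕ => q ^ n := summable_geometric_of_lt_one hq0 hq1
  have harith : Summable fun n : ℕ => (n : ℝ) * q ^ n := by
    simpa using summable_pow_mul_geometric_of_norm_lt_one 1
      (by rwa [Real.norm_eq_abs, abs_of_nonneg hq0])
  have h : Summable fun n : ℕ => (1 + c * n) * q ^ n :=
    (hgeom.add (harith.mul_left c)).congr fun n => by ring
  exact ((summable_nat_add_iff 1).2 h).congr fun n => by push_cast; ring

section Kernel

variable {T : Type*} {par : T → T} {lev : T → ℤ} {ν : Measure (PBoundary par lev)}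
  {b : PBoundary par lev → ℝ} {B c₁ c₂ α CK : ℝ} {conf : T → PBoundary par lev → T}

lemma setLIntegral_sector_iterate_diff_le (hlev : ∀ x, lev (par x) = lev x + 1)
    (hν : ∀ x, 0 < ν (sector par lev x) ∧ ν (sector par lev x) < ⊤)
    (hbint : ∀ x, IntegrableOn b (sector par lev x) ν) (hB : 0 ≤ B)
    (hBMO : ∀ x, ∫ ω in sector par lev x, |b ω - ⨍ ξ in sector par lev x, b ξ ∂ν| ∂ν
      ≤ B * mnu par lev ν x)
    (hdouble : ∀ y, mnu par lev ν (par y) ≤ c₁ * mnu par lev ν y)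
    (hconf : ∀ x ω, IsConfluent par lev x ω (conf x ω)) {K : PBoundary par lev → ℝ} {x v : T}
    (hK : ∀ ω, |K ω| ≤ mnu par lev ν x ^ α / mnu par lev ν (conf x ω) ^ (α + 1))
    {d : ℕ} (hd : par^[d] x = v) (n : ℕ) :
    ∫⁻ ω in sector par lev (par^[n + 1] v) \ sector par lev (par^[n] v),
        ENNReal.ofReal |K ω| * ENNReal.ofReal |b ω - ⨍ ξ in sector par lev v, b ξ ∂ν| ∂ν
      ≤ ENNReal.ofReal
          (B * (1 + c₁ * (n + 1)) * (mnu par lev ν x / mnu par lev ν (par^[n + 1] v)) ^ α) := by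
  set M := mnu par lev ν (par^[n + 1] v)
  set a := ⨍ ξ in sector par lev v, b ξ ∂ν
  have hM := mnu_pos hν (par^[n + 1] v)
  have hx := mnu_pos hν x
  calc _ ≤ ∫⁻ ω in sector par lev (par^[n + 1] v) \ sector par lev (par^[n] v),
        ENNReal.ofReal (mnu par lev ν x ^ α / M ^ (α + 1)) * ENNReal.ofReal |b ω - a| ∂ν := by
        refine setLIntegral_mono' ((measurableSet_sector _).diff (measurableSet_sector _))
          fun ω hω => ?_
        have hKω := hK ω
        rw [(hconf x ω).eq_of_mem_diff hlev hd hω] at hKω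
        gcongr
    _ ≤ ENNReal.ofReal (mnu par lev ν x ^ α / M ^ (α + 1)) *
        ∫⁻ ω in sector par lev (par^[n + 1] v), ENNReal.ofReal |b ω - a| ∂ν := by
        rw [lintegral_const_mul' _ _ ENNReal.ofReal_ne_top]
        gcongr
        exact Set.sdiff_subset
    _ ≤ ENNReal.ofReal (mnu par lev ν x ^ α / M ^ (α + 1)) *
        ENNReal.ofReal (B * (1 + c₁ * (n + 1 : ℕ)) * M) := by
        gcongr
        exact lintegral_sector_iterate_abs_sub_average_le hlev hν hbint hB hBMO hdouble v (n + 1)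
    _ = _ := by
        rw [← ENNReal.ofReal_mul (by positivity)]
        congr 1
        rw [Real.rpow_add hM, Real.rpow_one, Real.div_rpow hx.le hM.le]
        push_cast
        field_simp
        ring

lemma tsum_setLIntegral_sector_iterate_diff_le (hlev : ∀ x, lev (par x) = lev x + 1)
    (hν : ∀ x, 0 < ν (sector par lev x) ∧ ν (sector par lev x) < ⊤)
    (hbint : ∀ x, IntegrableOn b (sector par lev x) ν) (hB : 0 ≤ B)
    (hBMO : ∀ x, ∫ ω in sector par lev x, |b ω - ⨍ ξ in sector par lev x, b ξ ∂ν| ∂ν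
      ≤ B * mnu par lev ν x)
    (hc₁ : 0 ≤ c₁) (hc₂ : 0 < c₂) (hα : 0 ≤ α)
    (hdouble : ∀ y, mnu par lev ν (par y) ≤ c₁ * mnu par lev ν y)
    (hgrow : ∀ y, c₂ * mnu par lev ν y ≤ mnu par lev ν (par y))
    (hsum : Summable fun n : ℕ => (1 + c₁ * (n + 1)) * (c₂ ^ (-α)) ^ (n + 1))
    (hconf : ∀ x ω, IsConfluent par lev x ω (conf x ω)) {K : PBoundary par lev → ℝ} {x v : T}
    (hK : ∀ ω, |K ω| ≤ mnu par lev ν x ^ α / mnu par lev ν (conf x ω) ^ (α + 1))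
    {d : ℕ} (hd : par^[d] x = v) :
    ∑' n : ℕ, ∫⁻ ω in sector par lev (par^[n + 1] v) \ sector par lev (par^[n] v),
        ENNReal.ofReal |K ω| * ENNReal.ofReal |b ω - ⨍ ξ in sector par lev v, b ξ ∂ν| ∂ν
      ≤ ENNReal.ofReal (B * (mnu par lev ν x / mnu par lev ν v) ^ α *
          ∑' n : ℕ, (1 + c₁ * (n + 1)) * (c₂ ^ (-α)) ^ (n + 1)) := by
  set R := (mnu par lev ν x / mnu par lev ν v) ^ α
  have hx := mnu_pos hν x
  have hv := mnu_pos hν v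
  calc _ ≤ ∑' n : ℕ, ENNReal.ofReal (B * R * ((1 + c₁ * (n + 1)) * (c₂ ^ (-α)) ^ (n + 1))) := by
        refine ENNReal.tsum_le_tsum fun n => (setLIntegral_sector_iterate_diff_le hlev hν hbint hB
          hBMO hdouble hconf hK hd n).trans (ENNReal.ofReal_le_ofReal ?_)
        have hM := mnu_pos hν (par^[n + 1] v)
        have hsplit : (mnu par lev ν x / mnu par lev ν (par^[n + 1] v)) ^ α
            = R * (mnu par lev ν v / mnu par lev ν (par^[n + 1] v)) ^ α := by
          rw [← Real.mul_rpow (by positivity) (by positivity), div_mul_div_cancel₀ hv.ne']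
        have hdecay : (mnu par lev ν v / mnu par lev ν (par^[n + 1] v)) ^ α
            ≤ (c₂ ^ (-α)) ^ (n + 1) :=
          div_rpow_le_rpow_neg_pow hv hc₂ hα (pow_mul_le_apply_iterate hc₂.le hgrow v (n + 1))
        rw [hsplit]
        calc B * (1 + c₁ * (n + 1)) * (R * (mnu par lev ν v / mnu par lev ν (par^[n + 1] v)) ^ α)
            ≤ B * (1 + c₁ * (n + 1)) * (R * (c₂ ^ (-α)) ^ (n + 1)) := by gcongr
          _ = B * R * ((1 + c₁ * (n + 1)) * (c₂ ^ (-α)) ^ (n + 1)) := by ring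
    _ = _ := by
        rw [← ENNReal.ofReal_tsum_of_nonneg (fun n => by positivity) (hsum.mul_left _),
          tsum_mul_left]

lemma ofReal_abs_integral_mul_le (hlev : ∀ x, lev (par x) = lev x + 1)
    (hν : ∀ x, 0 < ν (sector par lev x) ∧ ν (sector par lev x) < ⊤)
    (hbint : ∀ x, IntegrableOn b (sector par lev x) ν) (hB : 0 ≤ B)
    (hBMO : ∀ x, ∫ ω in sector par lev x, |b ω - ⨍ ξ in sector par lev x, b ξ ∂ν| ∂ν
      ≤ B * mnu par lev ν x)
    (hc₁ : 0 ≤ c₁) (hc₂ : 0 < c₂) (hα : 0 ≤ α)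
    (hdouble : ∀ y, mnu par lev ν (par y) ≤ c₁ * mnu par lev ν y)
    (hgrow : ∀ y, c₂ * mnu par lev ν y ≤ mnu par lev ν (par y))
    (hsum : Summable fun n : ℕ => (1 + c₁ * (n + 1)) * (c₂ ^ (-α)) ^ (n + 1))
    (hconf : ∀ x ω, IsConfluent par lev x ω (conf x ω)) {K : PBoundary par lev → ℝ} {x v : T}
    (hK₁ : Integrable K ν) (hK₀ : ∫ ω, K ω ∂ν = 0)
    (hK : ∀ ω, |K ω| ≤ mnu par lev ν x ^ α / mnu par lev ν (conf x ω) ^ (α + 1))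
    {d : ℕ} (hd : par^[d] x = v) :
    ENNReal.ofReal |∫ ω, K ω * b ω ∂ν|
      ≤ ∫⁻ ω in sector par lev v,
          ENNReal.ofReal |K ω| * ENNReal.ofReal |b ω - ⨍ ξ in sector par lev v, b ξ ∂ν| ∂ν
        + ENNReal.ofReal (B * (mnu par lev ν x / mnu par lev ν v) ^ α *
          ∑' n : ℕ, (1 + c₁ * (n + 1)) * (c₂ ^ (-α)) ^ (n + 1)) := by
  set a := ⨍ ξ in sector par lev v, b ξ ∂ν
  rw [← integral_mul_sub_const_of_integral_eq_zero hK₁ hK₀ b a, ← Real.enorm_eq_ofReal_abs]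
  calc ‖∫ ω, K ω * (b ω - a) ∂ν‖ₑ
      ≤ ∫⁻ ω, ENNReal.ofReal |K ω| * ENNReal.ofReal |b ω - a| ∂ν := by
        simpa only [enorm_mul, Real.enorm_eq_ofReal_abs] using
          enorm_integral_le_lintegral_enorm (μ := ν) fun ω => K ω * (b ω - a)
    _ = ∫⁻ ω in sector par lev v, ENNReal.ofReal |K ω| * ENNReal.ofReal |b ω - a| ∂ν
        + ∑' n : ℕ, ∫⁻ ω in sector par lev (par^[n + 1] v) \ sector par lev (par^[n] v),
            ENNReal.ofReal |K ω| * ENNReal.ofReal |b ω - a| ∂ν :=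
        lintegral_eq_setLIntegral_add_tsum_diff (monotone_sector_iterate hlev v)
          (fun n => measurableSet_sector _)
          (iUnion_sector_iterate_eq_univ hlev fun ω => ⟨_, hconf v ω⟩) _
    _ ≤ _ := add_le_add_right (tsum_setLIntegral_sector_iterate_diff_le hlev hν hbint hB hBMO
          hc₁ hc₂ hα hdouble hgrow hsum hconf hK hd) _

lemma ofReal_abs_integral_mul_mul_mnu_le (hlev : ∀ x, lev (par x) = lev x + 1)
    (hν : ∀ x, 0 < ν (sector par lev x) ∧ ν (sector par lev x) < ⊤)
    (hbint : ∀ x, IntegrableOn b (sector par lev x) ν) (hB : 0 ≤ B)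
    (hBMO : ∀ x, ∫ ω in sector par lev x, |b ω - ⨍ ξ in sector par lev x, b ξ ∂ν| ∂ν
      ≤ B * mnu par lev ν x)
    (hc₁ : 0 ≤ c₁) (hc₂ : 0 < c₂) (hα : 0 ≤ α)
    (hdouble : ∀ y, mnu par lev ν (par y) ≤ c₁ * mnu par lev ν y)
    (hgrow : ∀ y, c₂ * mnu par lev ν y ≤ mnu par lev ν (par y))
    (hsum : Summable fun n : ℕ => (1 + c₁ * (n + 1)) * (c₂ ^ (-α)) ^ (n + 1))
    (hconf : ∀ x ω, IsConfluent par lev x ω (conf x ω)) {K : PBoundary par lev → ℝ} {x v : T}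
    (hK₁ : Integrable K ν) (hK₀ : ∫ ω, K ω ∂ν = 0)
    (hK : ∀ ω, |K ω| ≤ mnu par lev ν x ^ α / mnu par lev ν (conf x ω) ^ (α + 1))
    {d : ℕ} (hd : par^[d] x = v) :
    ENNReal.ofReal (|∫ ω, K ω * b ω ∂ν| * mnu par lev ν x)
      ≤ ENNReal.ofReal (mnu par lev ν x) * ∫⁻ ω in sector par lev v,
          ENNReal.ofReal |K ω| * ENNReal.ofReal |b ω - ⨍ ξ in sector par lev v, b ξ ∂ν| ∂ν
        + ENNReal.ofReal (B * ∑' n : ℕ, (1 + c₁ * (n + 1)) * (c₂ ^ (-α)) ^ (n + 1)) *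
          (ENNReal.ofReal ((mnu par lev ν x / mnu par lev ν v) ^ α) * ν (sector par lev x)) := by
  set S := ∑' n : ℕ, (1 + c₁ * (n + 1)) * (c₂ ^ (-α)) ^ (n + 1)
  set R := (mnu par lev ν x / mnu par lev ν v) ^ α
  have hS : 0 ≤ S := tsum_nonneg fun n => by positivity
  have hR : 0 ≤ R := Real.rpow_nonneg (div_nonneg (mnu_pos hν x).le (mnu_pos hν v).le) α
  rw [ENNReal.ofReal_mul (abs_nonneg _), mul_comm]
  calc _ ≤ ENNReal.ofReal (mnu par lev ν x) * (∫⁻ ω in sector par lev v,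
          ENNReal.ofReal |K ω| * ENNReal.ofReal |b ω - ⨍ ξ in sector par lev v, b ξ ∂ν| ∂ν
          + ENNReal.ofReal (B * R * S)) := by
        gcongr
        exact ofReal_abs_integral_mul_le hlev hν hbint hB hBMO hc₁ hc₂ hα hdouble hgrow hsum
          hconf hK₁ hK₀ hK hd
    _ = _ := by
        rw [mul_add, ← ofReal_mnu hν x, ← ENNReal.ofReal_mul hR,
          ← ENNReal.ofReal_mul (mul_nonneg hB hS), ← ENNReal.ofReal_mul (mnu_pos hν x).le]
        congr 2
        ring

lemma tsum_tsector_mnu_mul_setLIntegral_le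
    (hν : ∀ x, 0 < ν (sector par lev x) ∧ ν (sector par lev x) < ⊤)
    (hbint : ∀ x, IntegrableOn b (sector par lev x) ν)
    (hBMO : ∀ x, ∫ ω in sector par lev x, |b ω - ⨍ ξ in sector par lev x, b ξ ∂ν| ∂ν
      ≤ B * mnu par lev ν x)
    {K : T → PBoundary par lev → ℝ} (hK : ∀ x, AEMeasurable (K x) ν)
    (hA2 : ∀ᵐ ω ∂ν, ∑' x : T, ENNReal.ofReal (|K x ω| * mnu par lev ν x) ≤ ENNReal.ofReal CK)
    (v : T) :
    ∑' x : tsector par v, ENNReal.ofReal (mnu par lev ν x.1) * ∫⁻ ω in sector par lev v,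
        ENNReal.ofReal |K x.1 ω| * ENNReal.ofReal |b ω - ⨍ ξ in sector par lev v, b ξ ∂ν| ∂ν
      ≤ ENNReal.ofReal CK * ENNReal.ofReal (B * mnu par lev ν v) := by
  set a := ⨍ ξ in sector par lev v, b ξ ∂ν
  have hb : AEMeasurable b (ν.restrict (sector par lev v)) := (hbint v).aemeasurable
  have hint : IntegrableOn (fun ω => |b ω - a|) (sector par lev v) ν :=
    ((hbint v).sub (integrableOn_const (hν v).2.ne)).abs
  have hA2v : ∀ᵐ ω ∂ν.restrict (sector par lev v),
      ∑' x : tsector par v, ENNReal.ofReal (|K x.1 ω| * mnu par lev ν x.1) ≤ ENNReal.ofReal CK :=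
    (ae_restrict_of_ae hA2).mono fun ω hω =>
      (ENNReal.tsum_comp_le_tsum_of_injective Subtype.val_injective _).trans hω
  refine (tsum_ofReal_mul_lintegral_le (fun x : tsector par v => (hK x.1).restrict)
    (G := fun ω => ENNReal.ofReal |b ω - a|) (by fun_prop) hA2v).trans ?_
  rw [← ofReal_integral_eq_lintegral_ofReal hint (ae_of_all _ fun _ => abs_nonneg _)]
  gcongr
  exact hBMO v

theorem tsum_tsector_ofReal_abs_integral_mul_le (hlev : ∀ x, lev (par x) = lev x + 1)
    (hν : ∀ x, 0 < ν (sector par lev x) ∧ ν (sector par lev x) < ⊤)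
    (hbint : ∀ x, IntegrableOn b (sector par lev x) ν) (hB : 0 ≤ B)
    (hBMO : ∀ x, ∫ ω in sector par lev x, |b ω - ⨍ ξ in sector par lev x, b ξ ∂ν| ∂ν
      ≤ B * mnu par lev ν x)
    (hc₁ : 0 ≤ c₁) (hc₂ : 1 < c₂) (hα : 0 < α) (hCK : 0 ≤ CK)
    (hdouble : ∀ y, mnu par lev ν (par y) ≤ c₁ * mnu par lev ν y)
    (hgrow : ∀ y, c₂ * mnu par lev ν y ≤ mnu par lev ν (par y))
    (hconf : ∀ x ω, IsConfluent par lev x ω (conf x ω)) {K : T → PBoundary par lev → ℝ}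
    (hA1 : ∀ x, Integrable (K x) ν ∧ ∫ ω, K x ω ∂ν = 0)
    (hA2 : ∀ᵐ ω ∂ν, ∑' x : T, ENNReal.ofReal (|K x ω| * mnu par lev ν x) ≤ ENNReal.ofReal CK)
    (hA3 : ∀ x ω, |K x ω| ≤ mnu par lev ν x ^ α / mnu par lev ν (conf x ω) ^ (α + 1))
    (v : T) :
    ∑' x : tsector par v, ENNReal.ofReal (|∫ ω, K x.1 ω * b ω ∂ν| * mnu par lev ν x.1)
      ≤ ENNReal.ofReal ((CK + (∑' n : ℕ, (1 + c₁ * (n + 1)) * (c₂ ^ (-α)) ^ (n + 1)) *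
          (1 - c₂ ^ (-α))⁻¹) * B * mnu par lev ν v) := by
  set q := c₂ ^ (-α)
  set S := ∑' n : ℕ, (1 + c₁ * (n + 1)) * q ^ (n + 1)
  have hq0 : 0 ≤ q := Real.rpow_nonneg (by linarith) _
  have hq1 : q < 1 := Real.rpow_lt_one_of_one_lt_of_neg hc₂ (neg_neg_of_pos hα)
  have hsum := summable_one_add_mul_mul_pow_succ hq0 hq1 c₁
  have hS : 0 ≤ S := tsum_nonneg fun n => by positivity
  have hv := mnu_pos hν v
  have hq : 0 < (1 - q)⁻¹ := inv_pos.2 (by linarith)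
  calc _ ≤ _ := ENNReal.tsum_le_tsum fun x : tsector par v =>
        ofReal_abs_integral_mul_mul_mnu_le hlev hν hbint hB hBMO hc₁ (by linarith) hα.le hdouble
          hgrow hsum hconf (hA1 x.1).1 (hA1 x.1).2 (hA3 x.1) x.2.choose_spec
    _ = _ := by rw [ENNReal.tsum_add, ENNReal.tsum_mul_left]
    _ ≤ ENNReal.ofReal CK * ENNReal.ofReal (B * mnu par lev ν v)
        + ENNReal.ofReal (B * S) * (ENNReal.ofReal (1 - q)⁻¹ * ν (sector par lev v)) :=
        add_le_add (tsum_tsector_mnu_mul_setLIntegral_le hν hbint hBMO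
            (fun x => (hA1 x).1.aemeasurable) hA2 v)
          (mul_le_mul_right (tsum_tsector_rpow_mul_measure_le hlev hν hc₂ hα hgrow v) _)
    _ = _ := by
        rw [← ofReal_mnu hν v, ← ENNReal.ofReal_mul hq.le,
          ← ENNReal.ofReal_mul hCK, ← ENNReal.ofReal_mul (mul_nonneg hB hS),
          ← ENNReal.ofReal_add (by positivity) (by positivity)]
        congr 1
        ring

end Kernel

/-- Assume every vertex has at least two successors and
`c₂ m_ν(y) ≤ m_ν(x) ≤ c₁ m_ν(y)` for `y ∈ s(x)`. If `b ∈ BMO` (with BMO bound `B`) and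
`K` satisfies (A1), (A2) with constant `C_K` and (A3) with exponent `α > 0`, then there is
a constant `C` depending only on `c₁, c₂, C_K, α` with
`Σ_{x ∈ T_v} |𝒦b(x)| m_ν(x) ≤ C ‖b‖_{BMO} m_ν(v)` for every `v ∈ T`; in particular
`σ = |𝒦b| m_ν` is a Carleson measure. -/
theorem stmt18 (c₁ c₂ CK α : ℝ) (hc₁ : 1 < c₁) (hc₂ : 1 < c₂) (hCK : 0 ≤ CK)
    (hα : 0 < α) :
    ∃ C : ℝ, 0 < C ∧
      ∀ (T : Type u) (par : T → T) (lev : T → ℤ),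
        Nonempty T →
        (∀ x : T, lev (par x) = lev x + 1) →
        (∀ x : T, {y : T | par y = x}.Finite) →
        (∀ x : T, ∃ y z : T, y ≠ z ∧ par y = x ∧ par z = x) →
        (∀ x y : T, ∃ n m : ℕ, par^[n] x = par^[m] y) →
        ∀ ν : Measure (PBoundary par lev),
          (∀ x : T, 0 < ν (sector par lev x) ∧ ν (sector par lev x) < ⊤) →
          -- local doubling: `c₂ m_ν(y) ≤ m_ν(x) ≤ c₁ m_ν(y)` for every successor `y` of `x`
          (∀ x y : T, par y = x →
            c₂ * mnu par lev ν y ≤ mnu par lev ν x ∧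
              mnu par lev ν x ≤ c₁ * mnu par lev ν y) →
          -- `conf x ω` is the confluent `x ∧ ω`
          ∀ conf : T → PBoundary par lev → T,
            (∀ (x : T) (ω : PBoundary par lev), ∃ n : ℕ,
              conf x ω = par^[n] x ∧ ω.1 (lev x + n) = par^[n] x ∧
                ∀ m : ℕ, ω.1 (lev x + m) = par^[m] x → n ≤ m) →
            -- `b` is locally integrable with BMO bound `B`
            ∀ b : PBoundary par lev → ℝ,
              (∀ x : T, IntegrableOn b (sector par lev x) ν) →
              ∀ B : ℝ, 0 ≤ B →
                (∀ x : T,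
                  ∫ ω in sector par lev x,
                      |b ω - (mnu par lev ν x)⁻¹ * ∫ ξ in sector par lev x, b ξ ∂ν| ∂ν
                    ≤ B * mnu par lev ν x) →
                -- the kernel `K` satisfies (A1), (A2), (A3)
                ∀ K : T → PBoundary par lev → ℝ,
                  (∀ x : T, Integrable (K x) ν ∧ ∫ ω, K x ω ∂ν = 0) →
                  (∀ᵐ ω ∂ν, ∑' x : T, ENNReal.ofReal (|K x ω| * mnu par lev ν x)
                    ≤ ENNReal.ofReal CK) →
                  (∀ (x : T) (ω : PBoundary par lev),
                    |K x ω| ≤ mnu par lev ν x ^ α / mnu par lev ν (conf x ω) ^ (α + 1)) →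
                  ∀ v : T,
                    ∑' x : tsector par v,
                        ENNReal.ofReal (|∫ ω, K x.1 ω * b ω ∂ν| * mnu par lev ν x.1)
                      ≤ ENNReal.ofReal (C * B * mnu par lev ν v) := by
  have hq : 0 < c₂ ^ (-α) := Real.rpow_pos_of_pos (by linarith) _
  have hq1 : c₂ ^ (-α) < 1 := Real.rpow_lt_one_of_one_lt_of_neg hc₂ (neg_neg_of_pos hα)
  have hS : 0 < ∑' n : ℕ, (1 + c₁ * (n + 1)) * (c₂ ^ (-α)) ^ (n + 1) :=
    (summable_one_add_mul_mul_pow_succ hq.le hq1 c₁).tsum_pos (fun n => by positivity) 0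
      (by positivity)
  have hS' : 0 < (1 - c₂ ^ (-α))⁻¹ := inv_pos.2 (by linarith)
  refine ⟨CK + (∑' n : ℕ, (1 + c₁ * (n + 1)) * (c₂ ^ (-α)) ^ (n + 1)) * (1 - c₂ ^ (-α))⁻¹,
    by positivity, ?_⟩
  intro T par lev _ hlev _ _ _ ν hν hdouble conf hconf b hbint B hB hBMO K hA1 hA2 hA3 v
  refine tsum_tsector_ofReal_abs_integral_mul_le hlev hν hbint hB (fun x => ?_) (by linarith) hc₂
    hα hCK (fun y => (hdouble _ y rfl).2) (fun y => (hdouble _ y rfl).1) hconf hA1 hA2 hA3 v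
  simpa only [setAverage_eq, smul_eq_mul, measureReal_def, mnu] using hBMO x
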